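/- (Knothe–Rosenblatt pushforward, marginal part) Let p_{y,x} be a probability density on ℝ^m × ℝ^d with marginal p_y(y) = ∫ p_{y,x}(y,x) dx, and let p_z(z_y, z_x) = p_{z_y}(z_y) p_{z_x}(z_x) be a product probability density on ℝ^m × ℝ^d. Suppose T : ℝ^{m+d} → ℝ^{m+d} is a C¹ diffeomorphism of block-triangular form T(y, x) = (T^y(y), T^x(y, x)) with T^y(y) ∈ ℝ^m, such that T_# p_{y,x} = p_z. Then T^y : ℝ^m → ℝ^m is a C¹ diffeomorphism satisfying (T^y)_# p_y = p_{z_y}; equivalently, its inverse S^y = (T^y)^{-1} satisfies (S^y)_# p_{z_y} = p_y. -/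

import Mathlib

/-!
Since `T` maps each fibre `{y} × ℝ^d` into `{Ty y} × ℝ^d`, its Jacobian is block lower-triangular,
so `det ∇T = det ∇Ty · det ∂ₓ(T v).2`; in particular `∇Ty` is invertible. Hence `(S (z, w)).1`,
whose image under `Ty` is always `z`, has zero derivative in `w` and depends on `z` only:
`S` is triangular as well, with first block `Sy`, and `det ∇S = det ∇Sy · det ∂_w (S v).2`.
Integrating the pushforward identity over `zx` and changing variables `x = (S (zy, zx)).2` in the
fibre integral defining `py` gives `pzy zy = py (Sy zy) · |det ∇Sy zy|`.
-/

open MeasureTheory Function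

open Module in
theorem LinearMap.toMatrix_prod_eq_fromBlocks {R M N ι κ : Type*} [CommRing R]
    [AddCommGroup M] [Module R M] [AddCommGroup N] [Module R N]
    [Fintype ι] [Fintype κ] [DecidableEq ι] [DecidableEq κ]
    (b : Basis ι R M) (c : Basis κ R N) (L : Module.End R (M × N)) :
    toMatrix (b.prod c) (b.prod c) L =
      Matrix.fromBlocks (toMatrix b b (fst R M N ∘ₗ L ∘ₗ inl R M N))
        (toMatrix c b (fst R M N ∘ₗ L ∘ₗ inr R M N))
        (toMatrix b c (snd R M N ∘ₗ L ∘ₗ inl R M N))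
        (toMatrix c c (snd R M N ∘ₗ L ∘ₗ inr R M N)) := by
  ext (i | i) (j | j) <;> simp [toMatrix_apply]

theorem LinearMap.det_eq_det_mul_det_of_fst_comp_inr_eq_zero {R M N : Type*} [CommRing R]
    [AddCommGroup M] [Module R M] [Module.Free R M] [Module.Finite R M]
    [AddCommGroup N] [Module R N] [Module.Free R N] [Module.Finite R N]
    (L : Module.End R (M × N)) (hL : fst R M N ∘ₗ L ∘ₗ inr R M N = 0) :
    L.det = (fst R M N ∘ₗ L ∘ₗ inl R M N).det * (snd R M N ∘ₗ L ∘ₗ inr R M N).det := by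
  classical
  let b := Module.Free.chooseBasis R M
  let c := Module.Free.chooseBasis R N
  rw [← det_toMatrix (b.prod c), ← det_toMatrix b, ← det_toMatrix c, toMatrix_prod_eq_fromBlocks,
    hL, map_zero, Matrix.det_fromBlocks_zero₁₂]

section Triangular

variable {α β γ δ : Type*}

theorem Function.LeftInverse.fst_of_fst_eq [Nonempty β] {T : α × β → γ × δ} {S : γ × δ → α × β}
    {Ty : α → γ} {Sy : γ → α} (h : LeftInverse S T) (hT : ∀ y x, (T (y, x)).1 = Ty y)
    (hS : ∀ z w, (S (z, w)).1 = Sy z) : LeftInverse Sy Ty := by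
  obtain ⟨x⟩ := ‹Nonempty β›
  intro y
  rw [← hT y x, ← hS _ (T (y, x)).2, Prod.mk.eta, h]

theorem Function.Bijective.snd_of_fst_eq {S : α × β → γ × δ} {Sy : α → γ} (hS : Bijective S)
    (hSy : Injective Sy) (h : ∀ z w, (S (z, w)).1 = Sy z) (z : α) :
    Bijective fun w => (S (z, w)).2 := by
  refine ⟨fun w w' hw => ?_, fun x => ?_⟩
  · have : S (z, w) = S (z, w') := Prod.ext (by rw [h, h]) hw
    exact congrArg Prod.snd (hS.1 this)
  · obtain ⟨v, hv⟩ := hS.2 (Sy z, x)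
    have hv1 : v.1 = z := hSy (by rw [← h v.1 v.2, Prod.mk.eta, hv])
    refine ⟨v.2, ?_⟩
    show (S (z, v.2)).2 = x
    rw [← hv1, Prod.mk.eta, hv]

end Triangular

section Calculus

variable {𝕜 E F G H : Type*} [NontriviallyNormedField 𝕜]
  [NormedAddCommGroup E] [NormedSpace 𝕜 E] [NormedAddCommGroup F] [NormedSpace 𝕜 F]
  [NormedAddCommGroup G] [NormedSpace 𝕜 G] [NormedAddCommGroup H] [NormedSpace 𝕜 H]

theorem ContDiff.of_fst_eq {n : WithTop ℕ∞} {f : E × F → G × H} {g : E → G}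
    (hf : ContDiff 𝕜 n f) (hfg : ∀ y x, (f (y, x)).1 = g y) : ContDiff 𝕜 n g := by
  rw [show g = fun y => (f (y, 0)).1 from funext fun y => (hfg y 0).symm]
  exact (hf.comp (contDiff_id.prodMk contDiff_const)).fst

theorem Differentiable.of_fst_eq {f : E × F → G × H} {g : E → G}
    (hf : Differentiable 𝕜 f) (hfg : ∀ y x, (f (y, x)).1 = g y) : Differentiable 𝕜 g := by
  rw [show g = fun y => (f (y, 0)).1 from funext fun y => (hfg y 0).symm]
  exact (hf.comp (differentiable_id.prodMk (differentiable_const 0))).fst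

theorem det_fderiv_of_fst_eq [FiniteDimensional 𝕜 E] [FiniteDimensional 𝕜 F]
    {f : E × F → E × F} {g : E → E} {y : E} {x : F} (hf : DifferentiableAt 𝕜 f (y, x))
    (hfg : ∀ y x, (f (y, x)).1 = g y) :
    (fderiv 𝕜 f (y, x)).det =
      (fderiv 𝕜 g y).det * (fderiv 𝕜 (fun x => (f (y, x)).2) x).det := by
  have hinl : HasFDerivAt (fun y => f (y, x)) (fderiv 𝕜 f (y, x) ∘L .inl 𝕜 E F) y :=
    hf.hasFDerivAt.comp y (hasFDerivAt_prodMk_left y x)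
  have hinr : HasFDerivAt (fun x => f (y, x)) (fderiv 𝕜 f (y, x) ∘L .inr 𝕜 E F) x :=
    hf.hasFDerivAt.comp x (hasFDerivAt_prodMk_right y x)
  have hg : fderiv 𝕜 g y = .fst 𝕜 E F ∘L fderiv 𝕜 f (y, x) ∘L .inl 𝕜 E F := by
    rw [show g = fun y => (f (y, x)).1 from funext fun y => (hfg y x).symm]
    exact hinl.fst.fderiv
  have hconst : .fst 𝕜 E F ∘L fderiv 𝕜 f (y, x) ∘L .inr 𝕜 E F = 0 := by
    have := hinr.fst
    simp only [hfg] at this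
    exact this.unique (hasFDerivAt_const _ _)
  rw [hg, hinr.snd.fderiv]
  exact LinearMap.det_eq_det_mul_det_of_fst_comp_inr_eq_zero _
    (congrArg ContinuousLinearMap.toLinearMap hconst)

theorem det_fderiv_ne_zero_of_rightInverse [FiniteDimensional 𝕜 E] {T S : E → E} {z : E}
    (hT : DifferentiableAt 𝕜 T (S z)) (hS : DifferentiableAt 𝕜 S z) (h : RightInverse S T) :
    (fderiv 𝕜 T (S z)).det ≠ 0 := by
  have hcomp : fderiv 𝕜 T (S z) ∘L fderiv 𝕜 S z = .id 𝕜 E := by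
    rw [← fderiv_comp z hT hS, show T ∘ S = id from funext h, fderiv_id]
  have hdet : (fderiv 𝕜 T (S z)).det * (fderiv 𝕜 S z).det = 1 := by
    rw [← LinearMap.det_comp]
    exact (congrArg ContinuousLinearMap.det hcomp).trans LinearMap.det_id
  exact left_ne_zero_of_mul_eq_one hdet

theorem fst_apply_eq_of_rightInverse_of_fst_eq [IsRCLikeNormedField 𝕜]
    [FiniteDimensional 𝕜 E] [FiniteDimensional 𝕜 F] {T S : E × F → E × F} {Ty : E → E}
    (hT : Differentiable 𝕜 T) (hS : Differentiable 𝕜 S) (hTS : RightInverse S T)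
    (hTy : ∀ y x, (T (y, x)).1 = Ty y) (z : E) (w w' : F) : (S (z, w)).1 = (S (z, w')).1 := by
  set G := fun w => (S (z, w)).1
  have hG : Differentiable 𝕜 G := (hS.comp ((differentiable_const z).prodMk differentiable_id)).fst
  have hTyG : Ty ∘ G = fun _ => z := funext fun w => by
    simp only [comp_apply, G]
    rw [← hTy _ (S (z, w)).2, Prod.mk.eta, hTS]
  refine is_const_of_fderiv_eq_zero hG (fun w => ?_) w w'
  have hdet : (fderiv 𝕜 Ty (G w)).det ≠ 0 := by
    have := det_fderiv_ne_zero_of_rightInverse (hT _) (hS (z, w)) hTS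
    rw [← Prod.mk.eta (p := S (z, w)), det_fderiv_of_fst_eq (hT _) hTy] at this
    exact left_ne_zero_of_mul this
  have hinj : Injective (fderiv 𝕜 Ty (G w)) :=
    ((Module.End.isUnit_iff _).mp ((LinearMap.isUnit_iff_isUnit_det _).mpr hdet.isUnit)).injective
  have hcomp : fderiv 𝕜 Ty (G w) ∘L fderiv 𝕜 G w = 0 := by
    rw [← fderiv_comp w (hT.of_fst_eq hTy _) (hG w), hTyG, fderiv_const_apply]
  ext u : 1
  exact hinj (by simpa using congrArg (· u) hcomp)

end Calculus

theorem integral_comp_mul_abs_det_fderiv_of_fst_eq {E F : Type*}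
    [NormedAddCommGroup E] [NormedSpace ℝ E] [FiniteDimensional ℝ E]
    [NormedAddCommGroup F] [NormedSpace ℝ F] [FiniteDimensional ℝ F]
    [MeasurableSpace F] [BorelSpace F] (μ : Measure F) [μ.IsAddHaarMeasure]
    {S : E × F → E × F} {Sy : E → E} (hS : Differentiable ℝ S) (hSbij : Bijective S)
    (hSy : Injective Sy) (hSSy : ∀ z w, (S (z, w)).1 = Sy z) (p : E × F → ℝ) (z : E) :
    ∫ w, p (S (z, w)) * |(fderiv ℝ S (z, w)).det| ∂μ =
      |(fderiv ℝ Sy z).det| * ∫ x, p (Sy z, x) ∂μ := by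
  set f := fun w => (S (z, w)).2
  have hf : Differentiable ℝ f := (hS.comp ((differentiable_const z).prodMk differentiable_id)).snd
  have hfbij : Bijective f := hSbij.snd_of_fst_eq hSy hSSy z
  have hcov := integral_image_eq_integral_abs_det_fderiv_smul μ MeasurableSet.univ
    (fun w _ => (hf w).hasFDerivAt.hasFDerivWithinAt) hfbij.injective.injOn fun x => p (Sy z, x)
  rw [Set.image_univ, hfbij.surjective.range_eq, Measure.restrict_univ] at hcov
  rw [hcov, ← integral_const_mul]
  refine integral_congr_ae (Filter.Eventually.of_forall fun w => ?_)
  have hSzw : S (z, w) = (Sy z, f w) := Prod.ext (hSSy z w) rfl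
  simp only [hSzw, det_fderiv_of_fst_eq (hS _) hSSy, abs_mul, smul_eq_mul]
  ring

theorem knothe_rosenblatt_marginal_general
    (m d : ℕ)
    (pjoint : (Fin m → ℝ) × (Fin d → ℝ) → ℝ)
    (py : (Fin m → ℝ) → ℝ) (hpy : ∀ y, py y = ∫ x, pjoint (y, x))
    (pzy : (Fin m → ℝ) → ℝ) (pzx : (Fin d → ℝ) → ℝ)
    (hpzx_prob : ∫ zx, pzx zx = 1)
    (T S : (Fin m → ℝ) × (Fin d → ℝ) → (Fin m → ℝ) × (Fin d → ℝ))
    (hT : ContDiff ℝ 1 T) (hS : ContDiff ℝ 1 S)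
    (hleft : Function.LeftInverse S T) (hright : Function.RightInverse S T)
    (Ty : (Fin m → ℝ) → (Fin m → ℝ))
    (htriangular : ∀ y x, (T (y, x)).1 = Ty y)
    (hpush : ∀ v : (Fin m → ℝ) × (Fin d → ℝ),
      pzy v.1 * pzx v.2 = pjoint (S v) * |(fderiv ℝ S v).det|) :
    ContDiff ℝ 1 Ty ∧
    ∃ Sy : (Fin m → ℝ) → (Fin m → ℝ), ContDiff ℝ 1 Sy ∧
      Function.LeftInverse Sy Ty ∧ Function.RightInverse Sy Ty ∧
      ∀ zy, pzy zy = py (Sy zy) * |(fderiv ℝ Sy zy).det| := by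
  have hSd : Differentiable ℝ S := hS.differentiable one_ne_zero
  set Sy := fun z => (S (z, 0)).1
  have hSy : ∀ z w, (S (z, w)).1 = Sy z := fun z w =>
    fst_apply_eq_of_rightInverse_of_fst_eq (hT.differentiable one_ne_zero) hSd hright htriangular z w 0
  have hTySy : RightInverse Sy Ty := hright.fst_of_fst_eq hSy htriangular
  refine ⟨hT.of_fst_eq htriangular, Sy, hS.of_fst_eq hSy, hleft.fst_of_fst_eq htriangular hSy,
    hTySy, fun z => ?_⟩
  calc pzy z = ∫ w, pzy z * pzx w := by rw [integral_const_mul, hpzx_prob, mul_one]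
    _ = ∫ w, pjoint (S (z, w)) * |(fderiv ℝ S (z, w)).det| := by simp_rw [← hpush]
    _ = |(fderiv ℝ Sy z).det| * ∫ x, pjoint (Sy z, x) :=
      integral_comp_mul_abs_det_fderiv_of_fst_eq volume hSd ⟨hright.injective, hleft.surjective⟩
        hTySy.injective hSy pjoint z
    _ = py (Sy z) * |(fderiv ℝ Sy z).det| := by rw [hpy, mul_comm]

/-- **Knothe–Rosenblatt pushforward, marginal part.** Let `pjoint`
be a probability density on ℝ^m × ℝ^d with marginal `py`, and let
`pz (zy, zx) = pzy zy * pzx zx` be a product probability density. If `T` is a C¹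
diffeomorphism (inverse `S`) of block-triangular form `T (y, x) = (Ty y, ...)`
with `T_# pjoint = pz` (expressed by the density formula
`pz v = pjoint (S v) * |det ∇S(v)|`), then `Ty` is a C¹ diffeomorphism of ℝ^m
whose inverse `Sy` satisfies `(Ty)_# py = pzy`, i.e.
`pzy zy = py (Sy zy) * |det ∇Sy(zy)|` for all `zy`. -/
theorem knothe_rosenblatt_marginal
    (m d : ℕ)
    (pjoint : (Fin m → ℝ) × (Fin d → ℝ) → ℝ)
    (hpjoint_nonneg : ∀ w, 0 ≤ pjoint w) (hpjoint_prob : ∫ w, pjoint w = 1)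
    (py : (Fin m → ℝ) → ℝ) (hpy : ∀ y, py y = ∫ x, pjoint (y, x))
    (pzy : (Fin m → ℝ) → ℝ) (pzx : (Fin d → ℝ) → ℝ)
    (hpzy_nonneg : ∀ zy, 0 ≤ pzy zy) (hpzx_nonneg : ∀ zx, 0 ≤ pzx zx)
    (hpzy_prob : ∫ zy, pzy zy = 1) (hpzx_prob : ∫ zx, pzx zx = 1)
    (T S : (Fin m → ℝ) × (Fin d → ℝ) → (Fin m → ℝ) × (Fin d → ℝ))
    (hT : ContDiff ℝ 1 T) (hS : ContDiff ℝ 1 S)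
    (hleft : Function.LeftInverse S T) (hright : Function.RightInverse S T)
    (Ty : (Fin m → ℝ) → (Fin m → ℝ))
    (htriangular : ∀ y x, (T (y, x)).1 = Ty y)
    (hpush : ∀ v : (Fin m → ℝ) × (Fin d → ℝ),
      pzy v.1 * pzx v.2 = pjoint (S v) * |(fderiv ℝ S v).det|) :
    ContDiff ℝ 1 Ty ∧
    ∃ Sy : (Fin m → ℝ) → (Fin m → ℝ), ContDiff ℝ 1 Sy ∧
      Function.LeftInverse Sy Ty ∧ Function.RightInverse Sy Ty ∧
      ∀ zy, pzy zy = py (Sy zy) * |(fderiv ℝ Sy zy).det| :=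
  knothe_rosenblatt_marginal_general m d pjoint py hpy pzy pzx hpzx_prob T S hT hS hleft hright Ty
    htriangular hpush
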